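/- For all x ≥ 0 and α ≥ 1/√6, the function f(x) = x·log(x) − x·log(α + x) + α − 1/(12(α + x)) is nonnegative (with the convention 0·log 0 = 0). -/

import Mathlib

open Real

/-!
Since `log y ≤ sinh (log y) = (y - y⁻¹) / 2` for `y ≥ 1`, taking `y = (α + x) / x` gives
`x log ((α + x) / x) ≤ α - α² / (2 (α + x))`, and `α² ≥ 1/6` makes `α² / (2 (α + x))`
dominate `1 / (12 (α + x))`.
-/

lemma Real.log_le_half_sub_inv {y : ℝ} (hy : 1 ≤ y) : log y ≤ (y - y⁻¹) / 2 := by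
  rw [← sinh_log (by linarith)]
  exact self_le_sinh_iff.mpr (log_nonneg hy)

lemma Real.mul_log_add_sub_mul_log_le {x α : ℝ} (hx : 0 ≤ x) (hα : 0 < α) :
    x * log (α + x) - x * log x ≤ α - α ^ 2 / (2 * (α + x)) := by
  rcases hx.eq_or_lt with rfl | hx
  · simp only [zero_mul, sub_zero, add_zero]
    rw [sq, mul_div_mul_right _ _ hα.ne']
    linarith
  have hlog := log_le_half_sub_inv ((one_le_div hx).mpr (by linarith : x ≤ α + x))
  rw [log_div (by positivity) hx.ne', inv_div] at hlog
  calc x * log (α + x) - x * log x = x * (log (α + x) - log x) := by ring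
    _ ≤ x * (((α + x) / x - x / (α + x)) / 2) := mul_le_mul_of_nonneg_left hlog hx.le
    _ = α - α ^ 2 / (2 * (α + x)) := by field_simp; ring

theorem stmt_0 (x α : ℝ) (hx : 0 ≤ x) (hα : 1 / Real.sqrt 6 ≤ α) :
    0 ≤ x * Real.log x - x * Real.log (α + x) + α - 1 / (12 * (α + x)) := by
  have hα0 : 0 < α := lt_of_lt_of_le (by positivity) hα
  have hα_sq : 1 / 6 ≤ α ^ 2 := by
    calc (1 : ℝ) / 6 = (1 / √6) ^ 2 := by rw [div_pow, sq_sqrt (by norm_num)]; norm_num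
      _ ≤ α ^ 2 := pow_le_pow_left₀ (by positivity) hα 2
  have hcorr : 1 / (12 * (α + x)) ≤ α ^ 2 / (2 * (α + x)) := by
    rw [div_le_div_iff₀ (by positivity) (by positivity)]
    nlinarith
  linarith [mul_log_add_sub_mul_log_le hx hα0]
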